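/- Let p0 be a real number with 0 < p0 ≤ 100, let Δp > 0 be a real number, and let K* = 1 + ⌈(100 − p0)/Δp⌉. Let T be a natural number, let e : ℕ → ℕ → ℝ be an arbitrary error function, and let P : Finset ℝ → ℝ → ℝ be any thresholding operator satisfying the clamped-percentile law: for every nonempty finite set E of reals and every p ≥ 100, P(E, p) equals the maximum of E. Define focus sets recursively by F(1) ⊆ {0, 1, …, T−1} arbitrary, and for k ≥ 1, F(k+1) = { t ∈ F(k) : e(k, t) > P({ e(k, s) : s ∈ F(k) }, p0 + (k−1)·Δp) } whenever F(k) is nonempty, and F(k+1) = ∅ whenever F(k) is empty. Then F(K* + 1) = ∅; in particular, every index in F(1) is removed from the focus set (assigned a label) by iteration K*. -/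
import Mathlib


/-- Finite termination of the AutoTrend-LLT focus-set refinement.  With baseline
percentile `p0 ∈ (0, 100]`, step `Δp > 0`, and
`K* = 1 + ⌈(100 − p0)/Δp⌉`, consider any error function `e`, any thresholding
operator `P` satisfying the clamped-percentile law
(`P E p = max E` for nonempty `E` and `p ≥ 100`), and focus sets `F` with
`F 1 ⊆ {0, …, T−1}`,
`F (k+1) = { t ∈ F k : e k t > P {e k s : s ∈ F k} (p0 + (k−1)·Δp) }`
whenever `F k` is nonempty (`k ≥ 1`), and `F (k+1) = ∅` whenever `F k = ∅`
(`k ≥ 1`).  Then `F (K* + 1) = ∅`. -/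
theorem autotrend_llt_terminates
    (p0 Δp : ℝ) (hp0_pos : 0 < p0) (hp0_le : p0 ≤ 100) (hΔp : 0 < Δp)
    (Kstar : ℕ) (hK : Kstar = 1 + (⌈(100 - p0) / Δp⌉).toNat)
    (T : ℕ) (e : ℕ → ℕ → ℝ) (P : Finset ℝ → ℝ → ℝ)
    (hP : ∀ (E : Finset ℝ) (hE : E.Nonempty) (p : ℝ), 100 ≤ p → P E p = E.max' hE)
    (F : ℕ → Finset ℕ)
    (hF1 : F 1 ⊆ Finset.range T)
    (hstep : ∀ k, 1 ≤ k → (F k).Nonempty →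
      F (k + 1) =
        (F k).filter
          (fun t => e k t > P ((F k).image (fun s => e k s)) (p0 + ((k : ℝ) - 1) * Δp)))
    (hempty : ∀ k, 1 ≤ k → F k = ∅ → F (k + 1) = ∅) :
    F (Kstar + 1) = ∅ := by
  have hK1 : 1 ≤ Kstar := by omega
  rcases (F Kstar).eq_empty_or_nonempty with h | h
  · exact hempty Kstar hK1 h
  · rw [hstep Kstar hK1 h]
    -- the percentile argument is ≥ 100
    have hceil : ((100 - p0) / Δp : ℝ) ≤ ((⌈(100 - p0) / Δp⌉).toNat : ℝ) := by
      have h1 : ((100 - p0) / Δp : ℝ) ≤ (⌈(100 - p0) / Δp⌉ : ℝ) := Int.le_ceil _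
      have h2 : (0:ℤ) ≤ ⌈(100 - p0) / Δp⌉ := by
        apply Int.ceil_nonneg
        apply div_nonneg (by linarith) hΔp.le
      calc ((100 - p0) / Δp : ℝ) ≤ (⌈(100 - p0) / Δp⌉ : ℝ) := h1
        _ = ((⌈(100 - p0) / Δp⌉).toNat : ℝ) := by
            exact_mod_cast congrArg (Int.cast : ℤ → ℝ) (Int.toNat_of_nonneg h2).symm
    have hp100 : (100 : ℝ) ≤ p0 + ((Kstar : ℝ) - 1) * Δp := by
      have : ((Kstar : ℝ) - 1) = ((⌈(100 - p0) / Δp⌉).toNat : ℝ) := by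
        rw [hK]; push_cast; ring
      rw [this]
      have := (div_le_iff₀ hΔp).mp (le_trans (le_refl _) hceil)
      linarith
    have hne : ((F Kstar).image (fun s => e Kstar s)).Nonempty := h.image _
    rw [hP _ hne _ hp100]
    ext t
    simp only [Finset.mem_filter, Finset.notMem_empty, iff_false, not_and]
    intro ht
    have : e Kstar t ≤ ((F Kstar).image (fun s => e Kstar s)).max' hne :=
      Finset.le_max' _ _ (Finset.mem_image_of_mem _ ht)
    exact not_lt.mpr this
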